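/- arXiv:2107.00535 — 8 statements merged into one kernel-verified Lean document; each statement's English description precedes it below -/
import Mathlib

section
/- Let U be binomially distributed with parameters n and p, where n ≥ 1, 0 < p < 1 and n p ≥ 2, and let S = (U − n p)/√(n p). Then E[|S|³] ≤ 3. -/
/-!
Since `x²(|x| - 2)² ≥ 0`, we have `|x|³ ≤ x² + x⁴/4`, hence `E|S|³ ≤ E S² + E S⁴/4`. Both moments
are explicit: `E S² = 1 - p` and `E S⁴ = 3(1 - p)² + (1 - p)(1 - 6p(1 - p))/(np)`, obtained by
expanding `(U - np)²` and `(U - np)⁴` in the falling factorials `U(U - 1)⋯(U - j + 1)`, whose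
expectations are `n(n - 1)⋯(n - j + 1) pʲ`. For `np ≥ 2` this gives `E|S|³ ≤ 1 + 1/8 + 3/4`.
-/

open Finset MeasureTheory

theorem Nat.descFactorial_mul_choose {n k j : ℕ} (hjk : j ≤ k) :
    k.descFactorial j * n.choose k = n.descFactorial j * (n - j).choose (k - j) := by
  rw [Nat.descFactorial_eq_factorial_mul_choose, Nat.descFactorial_eq_factorial_mul_choose,
    Nat.mul_assoc, Nat.mul_assoc, Nat.mul_comm (k.choose j), Nat.choose_mul hjk]

theorem sum_descFactorial_mul_choose_mul_pow {R : Type*} [CommSemiring R] (n j : ℕ) (x y : R) :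
    ∑ k ∈ range (n + 1), (k.descFactorial j : R) * n.choose k * x ^ k * y ^ (n - k)
      = n.descFactorial j * x ^ j * (x + y) ^ (n - j) := by
  rcases lt_or_ge n j with h | h
  · rw [Nat.descFactorial_of_lt h, Nat.cast_zero, zero_mul, zero_mul]
    refine sum_eq_zero fun k hk => ?_
    rw [Nat.descFactorial_of_lt ((mem_range_succ_iff.1 hk).trans_lt h)]
    simp
  obtain ⟨m, rfl⟩ := Nat.exists_eq_add_of_le h
  rw [show j + m + 1 = j + (m + 1) by ring, sum_range_add,
    sum_eq_zero fun k hk => by rw [Nat.descFactorial_of_lt (mem_range.1 hk)]; simp,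
    zero_add, Nat.add_sub_cancel_left, add_pow, mul_sum]
  refine sum_congr rfl fun i _ => ?_
  have hc := congrArg (Nat.cast (R := R))
    (Nat.descFactorial_mul_choose (n := j + m) (Nat.le_add_right j i))
  push_cast at hc
  simp only [Nat.add_sub_cancel_left, Nat.add_sub_add_left] at hc ⊢
  calc _ = ((j + i).descFactorial j * (j + m).choose (j + i) : R) * x ^ j * x ^ i * y ^ (m - i) := by
        rw [pow_add]; ring
    _ = _ := by rw [hc]; ring

noncomputable def binomialWeight (n : ℕ) (p : ℝ) (k : ℕ) : ℝ :=
  n.choose k * p ^ k * (1 - p) ^ (n - k)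

theorem binomialWeight_nonneg (n : ℕ) {p : ℝ} (hp0 : 0 ≤ p) (hp1 : p ≤ 1) (k : ℕ) :
    0 ≤ binomialWeight n p k := by
  have : 0 ≤ 1 - p := sub_nonneg.2 hp1
  unfold binomialWeight
  positivity

section Moments

variable (n : ℕ) (p : ℝ)

theorem sum_descFactorial_mul_binomialWeight (j : ℕ) :
    ∑ k ∈ range (n + 1), (k.descFactorial j : ℝ) * binomialWeight n p k
      = n.descFactorial j * p ^ j := by
  simp_rw [binomialWeight, ← mul_assoc, sum_descFactorial_mul_choose_mul_pow, add_sub_cancel,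
    one_pow, mul_one]

theorem sum_binomialWeight : ∑ k ∈ range (n + 1), binomialWeight n p k = 1 := by
  simpa using sum_descFactorial_mul_binomialWeight n p 0

theorem sum_sub_sq_mul_binomialWeight :
    ∑ k ∈ range (n + 1), ((k : ℝ) - n * p) ^ 2 * binomialWeight n p k = n * p * (1 - p) := by
  set c : ℝ := n * p
  have key : ∀ k : ℕ, ((k : ℝ) - c) ^ 2
      = k.descFactorial 2 + (1 - 2 * c) * k.descFactorial 1 + c ^ 2 := by
    intro k
    simp only [← descPochhammer_eval_eq_descFactorial, descPochhammer_succ_eval,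
      descPochhammer_zero, Polynomial.eval_one, Nat.cast_one, Nat.cast_zero]
    ring
  simp_rw [key, add_mul, mul_assoc, sum_add_distrib, ← mul_sum,
    sum_descFactorial_mul_binomialWeight, sum_binomialWeight]
  simp only [← descPochhammer_eval_eq_descFactorial, descPochhammer_succ_eval,
    descPochhammer_zero, Polynomial.eval_one, Nat.cast_one, Nat.cast_zero]
  ring

theorem sum_sub_pow_four_mul_binomialWeight :
    ∑ k ∈ range (n + 1), ((k : ℝ) - n * p) ^ 4 * binomialWeight n p k
      = n * p * (1 - p) * (1 - 6 * p * (1 - p)) + 3 * (n * p * (1 - p)) ^ 2 := by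
  set c : ℝ := n * p
  have key : ∀ k : ℕ, ((k : ℝ) - c) ^ 4
      = k.descFactorial 4 + (6 - 4 * c) * k.descFactorial 3
        + (7 - 12 * c + 6 * c ^ 2) * k.descFactorial 2
        + (1 - 4 * c + 6 * c ^ 2 - 4 * c ^ 3) * k.descFactorial 1 + c ^ 4 := by
    intro k
    simp only [← descPochhammer_eval_eq_descFactorial, descPochhammer_succ_eval,
      descPochhammer_zero, Polynomial.eval_one, Nat.cast_one, Nat.cast_zero]
    ring
  simp_rw [key, add_mul, mul_assoc, sum_add_distrib, ← mul_sum,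
    sum_descFactorial_mul_binomialWeight, sum_binomialWeight]
  simp only [← descPochhammer_eval_eq_descFactorial, descPochhammer_succ_eval,
    descPochhammer_zero, Polynomial.eval_one, Nat.cast_one, Nat.cast_zero]
  ring

end Moments

theorem abs_pow_three_le_sq_add_pow_four_div_four (x : ℝ) : |x| ^ 3 ≤ x ^ 2 + x ^ 4 / 4 := by
  nlinarith [mul_nonneg (sq_nonneg x) (sq_nonneg (|x| - 2)), sq_abs x]

theorem sum_abs_div_sqrt_pow_three_mul_binomialWeight_le {n : ℕ} {p : ℝ} (hp0 : 0 ≤ p)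
    (hp1 : p ≤ 1) (hnp : 2 ≤ n * p) :
    ∑ k ∈ range (n + 1), |((k : ℝ) - n * p) / √(n * p)| ^ 3 * binomialWeight n p k ≤ 3 := by
  set c : ℝ := n * p
  have hc : 0 < c := by linarith
  have hsq : √c ^ 2 = c := Real.sq_sqrt hc.le
  calc ∑ k ∈ range (n + 1), |((k : ℝ) - c) / √c| ^ 3 * binomialWeight n p k
      ≤ ∑ k ∈ range (n + 1), (((k : ℝ) - c) ^ 2 * binomialWeight n p k / c
          + ((k : ℝ) - c) ^ 4 * binomialWeight n p k / (4 * c ^ 2)) := by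
        refine sum_le_sum fun k _ => ?_
        have h := mul_le_mul_of_nonneg_right
          (abs_pow_three_le_sq_add_pow_four_div_four (((k : ℝ) - c) / √c))
          (binomialWeight_nonneg n hp0 hp1 k)
        rw [div_pow, show (4 : ℕ) = 2 * 2 from rfl, pow_mul, div_pow, hsq] at h
        convert h using 1
        field_simp
    _ = c * (1 - p) / c
          + (c * (1 - p) * (1 - 6 * p * (1 - p)) + 3 * (c * (1 - p)) ^ 2) / (4 * c ^ 2) := by
        rw [sum_add_distrib, ← sum_div, ← sum_div, sum_sub_sq_mul_binomialWeight,
          sum_sub_pow_four_mul_binomialWeight]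
    _ = (1 - p) + (1 - p) * (1 - 6 * p * (1 - p)) / (4 * c) + 3 * (1 - p) ^ 2 / 4 := by
        field_simp
        ring
    _ ≤ 1 + 1 / (4 * c) + 3 / 4 := by
        have hq0 : 0 ≤ 1 - p := sub_nonneg.2 hp1
        gcongr
        · linarith
        · nlinarith [mul_nonneg hp0 hq0]
        · nlinarith
    _ ≤ 3 := by
        have : 1 / (4 * c) ≤ 1 / 8 := by gcongr; linarith
        linarith

theorem integral_comp_eq_sum_of_null_outside {Ω α E : Type*} [MeasurableSpace Ω]
    [MeasurableSpace α] [Countable α] [MeasurableSingletonClass α] [NormedAddCommGroup E]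
    [NormedSpace ℝ E] [CompleteSpace E] {μ : Measure Ω} [IsFiniteMeasure μ] {U : Ω → α}
    (hU : Measurable U) {s : Finset α} (hs : ∀ a ∉ s, μ {ω | U ω = a} = 0) (f : α → E) :
    ∫ ω, f (U ω) ∂μ = ∑ a ∈ s, μ.real {ω | U ω = a} • f a := by
  have hf : AEStronglyMeasurable f (μ.map U) :=
    StronglyMeasurable.of_discrete.aestronglyMeasurable
  have hs' : ∀ᵐ a ∂μ.map U, a ∈ (s : Set α) := ae_iff_of_countable.2 fun a ha => by
    by_contra h
    exact ha (by rw [Measure.map_apply hU (measurableSet_singleton a)]; exact hs a h)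
  have hfs : IntegrableOn f s (μ.map U) := by
    rw [← Set.biUnion_of_singleton (s : Set α), Finset.set_biUnion_coe]
    exact integrableOn_finset_iUnion.2 fun a _ => integrableOn_singleton
  rw [← integral_map hU.aemeasurable hf, integral_eq_setIntegral hs', setIntegral_finset _ hfs]
  exact sum_congr rfl fun a _ => by rw [map_measureReal_apply hU (measurableSet_singleton a)]; rfl

theorem stmt9_general
    {Ω : Type*} [MeasurableSpace Ω] (μ : MeasureTheory.Measure Ω)
    [MeasureTheory.IsProbabilityMeasure μ]
    (n : ℕ) (p : ℝ) (hp : 0 < p) (hp1 : p < 1)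
    (U : Ω → ℕ) (hUm : Measurable U)
    (hU : ∀ k : ℕ, μ {ω | U ω = k}
      = ENNReal.ofReal ((n.choose k : ℝ) * p ^ k * (1 - p) ^ (n - k)))
    (hnp : (2 : ℝ) ≤ n * p) :
    (∫ ω, |((U ω : ℝ) - n * p) / Real.sqrt (n * p)| ^ 3 ∂μ) ≤ 3 := by
  have hnull : ∀ k ∉ range (n + 1), μ {ω | U ω = k} = 0 := fun k hk => by
    rw [hU, Nat.choose_eq_zero_of_lt (by simpa using hk), Nat.cast_zero, zero_mul, zero_mul,
      ENNReal.ofReal_zero]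
  have hweight : ∀ k, μ.real {ω | U ω = k} = binomialWeight n p k := fun k => by
    rw [measureReal_def, hU]
    exact ENNReal.toReal_ofReal (binomialWeight_nonneg n hp.le hp1.le k)
  rw [integral_comp_eq_sum_of_null_outside hUm hnull
    fun k : ℕ => |((k : ℝ) - n * p) / √(n * p)| ^ 3]
  simp_rw [hweight, smul_eq_mul, mul_comm (binomialWeight n p _)]
  exact sum_abs_div_sqrt_pow_three_mul_binomialWeight_le hp.le hp1.le hnp

theorem stmt9
    {Ω : Type*} [MeasurableSpace Ω] (μ : MeasureTheory.Measure Ω)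
    [MeasureTheory.IsProbabilityMeasure μ]
    (n : ℕ) (hn : 1 ≤ n) (p : ℝ) (hp : 0 < p) (hp1 : p < 1)
    (U : Ω → ℕ) (hUm : Measurable U)
    (hU : ∀ k : ℕ, μ {ω | U ω = k}
      = ENNReal.ofReal ((n.choose k : ℝ) * p ^ k * (1 - p) ^ (n - k)))
    (hnp : (2 : ℝ) ≤ n * p) :
    (∫ ω, |((U ω : ℝ) - n * p) / Real.sqrt (n * p)| ^ 3 ∂μ) ≤ 3 :=
  stmt9_general μ n p hp hp1 U hUm hU hnp
end

section
/- Let U be binomially distributed with parameters n and p, where n ≥ 1, 0 < p < 1 and n p ≥ 2, and let S = (U − n p)/√(n p). Then E[S⁶] ≤ 28. -/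
/-!
Write `λ = n p`. Expanding `(k - λ)⁶` in the falling factorials `k^{(j)}` and using the factorial
moments `E[U^{(j)}] = n^{(j)} p^j` gives the exact sixth central moment
`E[(U - λ)⁶] = σ² (1 - 30 p q + 120 (p q)²) + 5 σ⁴ (5 - 26 p q) + 15 σ⁶`, with `q = 1 - p` and
`σ² = n p q`. Since `p q ≤ 1/4` and `q ≤ 1`, this is at most `λ + 25 λ² + 15 λ³`, which is
at most `28 λ³` once `λ ≥ 2`.
-/

open Finset MeasureTheory ProbabilityTheory

theorem Nat.cast_descFactorial_eq_prod_range {R : Type*} [CommRing R] (k j : ℕ) :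
    (k.descFactorial j : R) = ∏ i ∈ range j, ((k : R) - i) := by
  rw [← descPochhammer_eval_eq_descFactorial, descPochhammer_eval_eq_prod_range]

theorem Nat.choose_mul_descFactorial {n k j : ℕ} (hjk : j ≤ k) :
    n.choose k * k.descFactorial j = n.descFactorial j * (n - j).choose (k - j) := by
  rw [descFactorial_eq_factorial_mul_choose, descFactorial_eq_factorial_mul_choose,
    mul_left_comm, choose_mul hjk, mul_assoc]

section BinomialMoments

variable {R : Type*} [CommRing R]

theorem sum_choose_mul_pow_mul_descFactorial (n j : ℕ) (p : R) :
    ∑ k ∈ range (n + 1), n.choose k * p ^ k * (1 - p) ^ (n - k) * k.descFactorial j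
      = n.descFactorial j * p ^ j := by
  rcases lt_or_ge n j with hnj | hjn
  · rw [Nat.descFactorial_eq_zero_iff_lt.2 hnj, Nat.cast_zero, zero_mul]
    refine sum_eq_zero fun k hk => ?_
    rw [Nat.descFactorial_eq_zero_iff_lt.2 (by grind), Nat.cast_zero, mul_zero]
  obtain ⟨m, rfl⟩ := Nat.exists_eq_add_of_le hjn
  have hbelow : ∀ k ∈ range j,
      ((j + m).choose k * p ^ k * (1 - p) ^ (j + m - k) * k.descFactorial j : R) = 0 := by
    intro k hk
    rw [Nat.descFactorial_eq_zero_iff_lt.2 (mem_range.1 hk), Nat.cast_zero, mul_zero]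
  have hshift : ∀ i ∈ range (m + 1),
      ((j + m).choose (j + i) * p ^ (j + i) * (1 - p) ^ (j + m - (j + i))
        * (j + i).descFactorial j : R)
      = (j + m).descFactorial j * p ^ j * (p ^ i * (1 - p) ^ (m - i) * m.choose i) := by
    intro i _
    have h := Nat.choose_mul_descFactorial (n := j + m) (Nat.le_add_right j i)
    rw [Nat.add_sub_cancel_left, Nat.add_sub_cancel_left] at h
    replace h := congrArg (Nat.cast (R := R)) h
    push_cast at h
    rw [Nat.add_sub_add_left, pow_add]
    linear_combination (p ^ j * p ^ i * (1 - p) ^ (m - i)) * h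
  rw [add_assoc, sum_range_add, sum_eq_zero hbelow, zero_add, sum_congr rfl hshift,
    ← mul_sum, ← add_pow, add_sub_cancel, one_pow, mul_one]

-- The coefficients are `∑ₘ C(6, m) (-x)^(6-m) S(m, j)`, with `S` the Stirling numbers of the
-- second kind.
theorem sub_pow_six_eq_sum_descFactorial (k : ℕ) (x : R) :
    ((k : R) - x) ^ 6 = ∑ j : Fin 7, k.descFactorial j * ![x ^ 6,
      1 - 6*x + 15*x^2 - 20*x^3 + 15*x^4 - 6*x^5, 31 - 90*x + 105*x^2 - 60*x^3 + 15*x^4,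
      90 - 150*x + 90*x^2 - 20*x^3, 65 - 60*x + 15*x^2, 15 - 6*x, 1] j := by
  simp [Fin.sum_univ_succ, Nat.cast_descFactorial_eq_prod_range, prod_range_succ]
  ring

def binomialSixthCentralMoment (n p : R) : R :=
  n * p * (1 - p) * (1 - 30 * (p * (1 - p)) + 120 * (p * (1 - p)) ^ 2)
    + 5 * (n * p * (1 - p)) ^ 2 * (5 - 26 * (p * (1 - p)))
    + 15 * (n * p * (1 - p)) ^ 3

theorem sum_choose_mul_pow_mul_sub_pow_six (n : ℕ) (p : R) :
    ∑ k ∈ range (n + 1), n.choose k * p ^ k * (1 - p) ^ (n - k) * ((k : R) - n * p) ^ 6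
      = binomialSixthCentralMoment (n : R) p := by
  simp_rw [sub_pow_six_eq_sum_descFactorial, mul_sum]
  rw [sum_comm]
  simp_rw [← mul_assoc, ← sum_mul, sum_choose_mul_pow_mul_descFactorial]
  simp [binomialSixthCentralMoment, Fin.sum_univ_succ, Nat.cast_descFactorial_eq_prod_range,
    prod_range_succ]
  ring

end BinomialMoments

theorem binomialSixthCentralMoment_le {m p : ℝ} (hp : 0 ≤ p) (hp1 : p ≤ 1) (hmp : 2 ≤ m * p) :
    binomialSixthCentralMoment m p ≤ 28 * (m * p) ^ 3 := by
  set lam := m * p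
  set q := 1 - p
  have hq : 0 ≤ q := sub_nonneg.2 hp1
  have hq1 : q ≤ 1 := by linarith
  have hpq : 0 ≤ p * q := mul_nonneg hp hq
  have hpq' : p * q ≤ 1 / 4 := by nlinarith [sq_nonneg (p - 1 / 2)]
  have h1 : q * (1 - 30 * (p * q) + 120 * (p * q) ^ 2) ≤ 1 := by
    nlinarith [mul_nonneg hpq (by linarith : 0 ≤ 1 / 4 - p * q)]
  have h2 : q ^ 2 * (5 - 26 * (p * q)) ≤ 5 := by nlinarith [pow_le_one₀ hq hq1 (n := 2)]
  have h3 : q ^ 3 ≤ 1 := pow_le_one₀ hq hq1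
  have hlam0 : 0 ≤ lam := by linarith
  calc binomialSixthCentralMoment m p
      = lam * (q * (1 - 30 * (p * q) + 120 * (p * q) ^ 2))
        + 5 * lam ^ 2 * (q ^ 2 * (5 - 26 * (p * q))) + 15 * lam ^ 3 * q ^ 3 := by
        simp only [binomialSixthCentralMoment, lam, q]
        ring
    _ ≤ lam * 1 + 5 * lam ^ 2 * 5 + 15 * lam ^ 3 * 1 := by gcongr
    _ ≤ 28 * lam ^ 3 := by nlinarith [mul_nonneg (mul_nonneg hlam0 hlam0) (sub_nonneg.2 hmp)]

theorem map_eq_binomial {Ω : Type*} [MeasurableSpace Ω] {μ : Measure Ω} {U : Ω → ℕ}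
    (hUm : Measurable U) {n : ℕ} {p : ℝ} (hp : 0 ≤ p) (hp1 : p ≤ 1)
    (hU : ∀ k : ℕ, μ {ω | U ω = k}
      = ENNReal.ofReal ((n.choose k : ℝ) * p ^ k * (1 - p) ^ (n - k))) :
    μ.map U = binomial n ⟨p, hp, hp1⟩ :=
  Measure.ext_of_singleton fun k => by
    rw [Measure.map_apply hUm (measurableSet_singleton k), binomial_singleton]
    exact hU k

theorem stmt11_general
    {Ω : Type*} [MeasurableSpace Ω] (μ : MeasureTheory.Measure Ω)
    (n : ℕ) (p : ℝ) (hp : 0 < p) (hp1 : p < 1)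
    (U : Ω → ℕ) (hUm : Measurable U)
    (hU : ∀ k : ℕ, μ {ω | U ω = k}
      = ENNReal.ofReal ((n.choose k : ℝ) * p ^ k * (1 - p) ^ (n - k)))
    (hnp : (2 : ℝ) ≤ n * p) :
    (∫ ω, (((U ω : ℝ) - n * p) / Real.sqrt (n * p)) ^ 6 ∂μ) ≤ 28 := by
  have hnp0 : 0 < (n : ℝ) * p := by linarith
  have hsqrt : Real.sqrt (n * p) ^ 6 = (n * p) ^ 3 := by
    rw [show 6 = 2 * 3 by rfl, pow_mul, Real.sq_sqrt hnp0.le]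
  calc ∫ ω, (((U ω : ℝ) - n * p) / Real.sqrt (n * p)) ^ 6 ∂μ
      = ∫ k, (((k : ℝ) - n * p) / Real.sqrt (n * p)) ^ 6 ∂(μ.map U) := by
        rw [integral_map hUm.aemeasurable .of_discrete]
    _ = (∑ k ∈ range (n + 1), n.choose k * p ^ k * (1 - p) ^ (n - k) * ((k : ℝ) - n * p) ^ 6)
          / (n * p) ^ 3 := by
        rw [map_eq_binomial hUm hp.le hp1.le hU, integral_binomial, ← Nat.range_succ_eq_Iic,
          sum_div]
        simp_rw [div_pow, hsqrt, smul_eq_mul, mul_div_assoc]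
    _ ≤ 28 := by
        rw [div_le_iff₀ (pow_pos hnp0 3), sum_choose_mul_pow_mul_sub_pow_six]
        exact binomialSixthCentralMoment_le hp.le hp1.le hnp

theorem stmt11
    {Ω : Type*} [MeasurableSpace Ω] (μ : MeasureTheory.Measure Ω)
    [MeasureTheory.IsProbabilityMeasure μ]
    (n : ℕ) (hn : 1 ≤ n) (p : ℝ) (hp : 0 < p) (hp1 : p < 1)
    (U : Ω → ℕ) (hUm : Measurable U)
    (hU : ∀ k : ℕ, μ {ω | U ω = k}
      = ENNReal.ofReal ((n.choose k : ℝ) * p ^ k * (1 - p) ^ (n - k)))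
    (hnp : (2 : ℝ) ≤ n * p) :
    (∫ ω, (((U ω : ℝ) - n * p) / Real.sqrt (n * p)) ^ 6 ∂μ) ≤ 28 :=
  stmt11_general μ n p hp hp1 U hUm hU hnp
end

section
/- Let a > 0. Then for all x ≥ 0, |2x log(x/a) − 2(x−a) − (x−a)²/a + (x−a)³/(3a²)| ≤ 2(x−a)⁴/(3a³). -/
/-!
With `t = x / a` both sides scale by `a`, so it suffices to treat `a = 1`, where the claim
is a two-sided bound on `g t = 2 t log t - 2(t-1) - (t-1)² + (t-1)³/3`, the Taylor remainder
of order three of `2 t log t` at `t = 1`.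
Since `g'(t) = 2 (log t - (t-1) + (t-1)²/2)` and `log t - (t-1) + (t-1)²/2` is increasing with
a zero at `1`, `g` is minimal at `1`, so `g ≥ 0`. For the upper bound, `log t` lies below its
cubic Taylor polynomial at `1` (the difference has derivative `(t-1)³/t`), and multiplying
that inequality by `2t` gives exactly `g t ≤ 2(t-1)⁴/3`.
-/

open Real Set

theorem Set.OrdConnected.isMinOn_of_hasDerivAt {s : Set ℝ} (hs : s.OrdConnected)
    {f f' : ℝ → ℝ} {c : ℝ} (hc : c ∈ s) (hf : ∀ x ∈ s, HasDerivAt f (f' x) x)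
    (hsign : ∀ x ∈ s, 0 ≤ (x - c) * f' x) : IsMinOn f s c := by
  intro t ht
  have hcont : ∀ {a b}, a ∈ s → b ∈ s → ContinuousOn f (Icc a b) := fun ha hb x hx =>
    (hf x (hs.out ha hb hx)).continuousAt.continuousWithinAt
  have hderiv : ∀ {a b}, a ∈ s → b ∈ s →
      ∀ x ∈ interior (Icc a b), HasDerivWithinAt f (f' x) (interior (Icc a b)) x :=
    fun ha hb x hx => (hf x (hs.out ha hb (interior_subset hx))).hasDerivWithinAt
  rcases le_total c t with hct | htc
  · refine monotoneOn_of_hasDerivWithinAt_nonneg (convex_Icc c t) (hcont hc ht) (hderiv hc ht)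
      (fun x hx => ?_) (left_mem_Icc.2 hct) (right_mem_Icc.2 hct) hct
    rw [interior_Icc] at hx
    exact nonneg_of_mul_nonneg_right (hsign x (hs.out hc ht (Ioo_subset_Icc_self hx)))
      (sub_pos.2 hx.1)
  · refine antitoneOn_of_hasDerivWithinAt_nonpos (convex_Icc t c) (hcont ht hc) (hderiv ht hc)
      (fun x hx => ?_) (left_mem_Icc.2 htc) (right_mem_Icc.2 htc) htc
    rw [interior_Icc] at hx
    exact nonpos_of_mul_nonneg_right (hsign x (hs.out ht hc (Ioo_subset_Icc_self hx)))
      (sub_neg.2 hx.2)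

theorem Real.log_le_cubic_taylor {t : ℝ} (ht : 0 < t) :
    log t ≤ (t - 1) - (t - 1) ^ 2 / 2 + (t - 1) ^ 3 / 3 := by
  have hmin := ordConnected_Ioi.isMinOn_of_hasDerivAt (f := fun t =>
      (t - 1) - (t - 1) ^ 2 / 2 + (t - 1) ^ 3 / 3 - log t) (f' := fun t => (t - 1) ^ 3 / t)
    (c := 1) (mem_Ioi.2 one_pos) (fun x hx => by
      rw [mem_Ioi] at hx
      have h1 : HasDerivAt (fun t : ℝ => t - 1) 1 x := (hasDerivAt_id x).sub_const 1
      refine (((h1.sub ((h1.pow 2).div_const 2)).add ((h1.pow 3).div_const 3)).sub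
        (hasDerivAt_log hx.ne')).congr_deriv ?_
      field_simp
      ring)
    (fun x hx => by
      rw [mem_Ioi] at hx
      rw [← mul_div_assoc, show (x - 1) * (x - 1) ^ 3 = (x - 1) ^ 4 by ring]
      positivity) ht
  simp only [sub_self, log_one] at hmin
  norm_num at hmin
  linarith

theorem Real.sub_one_mul_log_sub_quadratic_taylor_nonneg {t : ℝ} (ht : 0 < t) :
    0 ≤ (t - 1) * (log t - ((t - 1) - (t - 1) ^ 2 / 2)) := by
  have hmono : MonotoneOn (fun t => log t - ((t - 1) - (t - 1) ^ 2 / 2)) (Ioi 0) := by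
    refine monotoneOn_of_hasDerivWithinAt_nonneg (f' := fun t => (t - 1) ^ 2 / t)
      (convex_Ioi 0) (fun x (hx : 0 < x) => ?_) (fun x hx => ?_) (fun x hx => ?_)
    · fun_prop (disch := exact hx.ne')
    · rw [interior_Ioi, mem_Ioi] at hx
      have h1 : HasDerivAt (fun t : ℝ => t - 1) 1 x := (hasDerivAt_id x).sub_const 1
      refine ((hasDerivAt_log hx.ne').sub
        (h1.sub ((h1.pow 2).div_const 2))).hasDerivWithinAt.congr_deriv ?_
      field_simp
      ring
    · rw [interior_Ioi, mem_Ioi] at hx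
      exact div_nonneg (sq_nonneg _) (le_of_lt hx)
  have h1 : (1 : ℝ) ∈ Ioi 0 := mem_Ioi.2 one_pos
  rcases le_total t 1 with htle | htge
  · have := hmono ht h1 htle
    simp only [sub_self, log_one] at this
    nlinarith
  · have := hmono h1 ht htge
    simp only [sub_self, log_one] at this
    nlinarith

theorem Real.cubic_taylor_le_two_mul_mul_log {t : ℝ} (ht : 0 < t) :
    2 * (t - 1) + (t - 1) ^ 2 - (t - 1) ^ 3 / 3 ≤ 2 * t * log t := by
  have hmin := ordConnected_Ioi.isMinOn_of_hasDerivAt (f := fun t =>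
      2 * t * log t - (2 * (t - 1) + (t - 1) ^ 2 - (t - 1) ^ 3 / 3))
    (f' := fun t => 2 * (log t - ((t - 1) - (t - 1) ^ 2 / 2))) (c := 1) (mem_Ioi.2 one_pos)
    (fun x hx => by
      rw [mem_Ioi] at hx
      have h1 : HasDerivAt (fun t : ℝ => t - 1) 1 x := (hasDerivAt_id x).sub_const 1
      refine ((((hasDerivAt_id' x).const_mul 2).mul (hasDerivAt_log hx.ne')).sub
        (((h1.const_mul 2).add (h1.pow 2)).sub ((h1.pow 3).div_const 3))).congr_deriv ?_
      field_simp
      ring)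
    (fun x hx => by
      rw [mem_Ioi] at hx
      nlinarith [sub_one_mul_log_sub_quadratic_taylor_nonneg hx]) ht
  simp only [sub_self, log_one] at hmin
  norm_num at hmin
  linarith

theorem Real.abs_two_mul_mul_log_sub_cubic_taylor_le {t : ℝ} (ht : 0 ≤ t) :
    |2 * t * log t - 2 * (t - 1) - (t - 1) ^ 2 + (t - 1) ^ 3 / 3| ≤ 2 * (t - 1) ^ 4 / 3 := by
  rcases ht.eq_or_lt with rfl | ht
  · norm_num
  have hlower := cubic_taylor_le_two_mul_mul_log ht
  have hupper := mul_le_mul_of_nonneg_left (log_le_cubic_taylor ht) (by positivity : 0 ≤ 2 * t)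
  rw [abs_le]
  constructor <;> nlinarith [pow_two_nonneg ((t - 1) ^ 2)]

theorem stmt14 (a : ℝ) (ha : 0 < a) (x : ℝ) (hx : 0 ≤ x) :
    |2 * x * Real.log (x / a) - 2 * (x - a) - (x - a) ^ 2 / a + (x - a) ^ 3 / (3 * a ^ 2)|
      ≤ 2 * (x - a) ^ 4 / (3 * a ^ 3) := by
  obtain ⟨t, ht, rfl⟩ : ∃ t, 0 ≤ t ∧ x = a * t :=
    ⟨x / a, div_nonneg hx ha.le, (mul_div_cancel₀ x ha.ne').symm⟩
  have hscale : 2 * (a * t) * log (a * t / a) - 2 * (a * t - a) - (a * t - a) ^ 2 / a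
      + (a * t - a) ^ 3 / (3 * a ^ 2)
      = a * (2 * t * log t - 2 * (t - 1) - (t - 1) ^ 2 + (t - 1) ^ 3 / 3) := by
    rw [mul_div_cancel_left₀ t ha.ne']
    field_simp
  have hscale' : 2 * (a * t - a) ^ 4 / (3 * a ^ 3) = a * (2 * (t - 1) ^ 4 / 3) := by
    field_simp
  rw [hscale, hscale', abs_mul, abs_of_pos ha]
  exact mul_le_mul_of_nonneg_left (abs_two_mul_mul_log_sub_cubic_taylor_le ht) ha.le
end

section
/- Let a > 0 and λ ≥ 3. Then for all x ≥ 0, |x^{λ+1}/a^λ − a − (λ+1)(x−a) − (λ(λ+1)/(2a))(x−a)² − ((λ−1)λ(λ+1)/(6a²))(x−a)³| ≤ ((λ−2)(λ−1)λ(λ+1)/24) · (1 + (x/a)^{λ−3}) · (x−a)⁴/a³. -/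
open Finset Nat Set Real

/-! With `t = x / a`, the left-hand side is `a` times the remainder of the cubic Taylor polynomial
of `t ↦ t ^ (λ + 1)` at `1`. By the Lagrange form of Taylor's theorem that remainder is
`(λ+1)λ(λ-1)(λ-2) ξ ^ (λ - 3) (t - 1) ^ 4 / 24` for some `ξ` between `1` and `t`, and since
`λ - 3 ≥ 0` we have `ξ ^ (λ - 3) ≤ max 1 t ^ (λ - 3) ≤ 1 + t ^ (λ - 3)`. -/

theorem taylorWithinEval_rpow_const_at_one {μ : ℝ} {n : ℕ} (hn : n ≤ μ) {s : Set ℝ}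
    (hs : UniqueDiffOn ℝ s) (h1 : (1 : ℝ) ∈ s) (t : ℝ) :
    taylorWithinEval (fun x : ℝ => x ^ μ) n s 1 t =
      ∑ k ∈ range (n + 1), (descPochhammer ℝ k).eval μ / k ! * (t - 1) ^ k := by
  rw [taylor_within_apply]
  refine sum_congr rfl fun k hk => ?_
  have hkμ : (k : ℝ) ≤ μ := le_trans (by exact_mod_cast Nat.lt_succ_iff.mp (mem_range.mp hk)) hn
  rw [iteratedDerivWithin_eq_iteratedDeriv hs (contDiffAt_rpow_const_of_le hkμ) h1,
    iteratedDeriv_eq_iterate, iter_deriv_rpow_const, one_rpow, smul_eq_mul]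
  ring

theorem rpow_taylor_mean_remainder_lagrange {μ : ℝ} {n : ℕ} (hn : ((n + 1 : ℕ) : ℝ) ≤ μ) {t : ℝ}
    (ht : t ≠ 1) :
    ∃ ξ ∈ uIoo 1 t,
      t ^ μ - ∑ k ∈ range (n + 1), (descPochhammer ℝ k).eval μ / k ! * (t - 1) ^ k =
        (descPochhammer ℝ (n + 1)).eval μ * ξ ^ (μ - (n + 1 : ℕ)) * (t - 1) ^ (n + 1)
          / (n + 1)! := by
  have hcd : ContDiffOn ℝ (n + 1) (fun x : ℝ => x ^ μ) (uIcc 1 t) := by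
    exact_mod_cast (contDiff_rpow_const_of_le hn).contDiffOn
  obtain ⟨ξ, hξ, h⟩ := taylor_mean_remainder_lagrange_iteratedDeriv ht.symm hcd
  refine ⟨ξ, hξ, ?_⟩
  rw [← taylorWithinEval_rpow_const_at_one (le_trans (by exact_mod_cast n.le_succ) hn)
    (uniqueDiffOn_uIcc ht.symm) left_mem_uIcc, h, iteratedDeriv_eq_iterate, iter_deriv_rpow_const]

theorem rpow_le_one_add_rpow_of_mem_uIcc {t ξ e : ℝ} (ht : 0 ≤ t) (hξ : ξ ∈ uIcc 1 t)
    (he : 0 ≤ e) : ξ ^ e ≤ 1 + t ^ e := by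
  rcases le_total 1 t with h1t | ht1
  · rw [uIcc_of_le h1t] at hξ
    linarith [rpow_le_rpow (by linarith [hξ.1]) hξ.2 he, rpow_nonneg ht e]
  · rw [uIcc_of_ge ht1] at hξ
    linarith [rpow_le_one (ht.trans hξ.1) hξ.2 he, rpow_nonneg ht e]

theorem abs_rpow_sub_taylor_le {μ : ℝ} {n : ℕ} (hn : ((n + 1 : ℕ) : ℝ) ≤ μ) {t : ℝ}
    (ht : 0 ≤ t) :
    |t ^ μ - ∑ k ∈ range (n + 1), (descPochhammer ℝ k).eval μ / k ! * (t - 1) ^ k| ≤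
      (descPochhammer ℝ (n + 1)).eval μ / (n + 1)! * (1 + t ^ (μ - (n + 1 : ℕ)))
        * |t - 1| ^ (n + 1) := by
  have hc : 0 ≤ (descPochhammer ℝ (n + 1)).eval μ :=
    descPochhammer_nonneg (by linarith)
  rcases eq_or_ne t 1 with rfl | ht1
  · simp [sum_range_succ']
  obtain ⟨ξ, hξ, h⟩ := rpow_taylor_mean_remainder_lagrange hn ht1
  have hξ' := uIoo_subset_uIcc_self hξ
  have hξ0 : 0 ≤ ξ := (le_inf zero_le_one ht).trans hξ'.1
  rw [h, abs_div, abs_mul, abs_mul, abs_pow, abs_of_nonneg hc, abs_of_nonneg (rpow_nonneg hξ0 _),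
    abs_of_pos (by positivity : (0 : ℝ) < (n + 1)!)]
  have hξt := rpow_le_one_add_rpow_of_mem_uIcc ht hξ' (sub_nonneg.2 hn)
  calc _ = (descPochhammer ℝ (n + 1)).eval μ / (n + 1)! * ξ ^ (μ - (n + 1 : ℕ))
        * |t - 1| ^ (n + 1) := by ring
    _ ≤ _ := by gcongr

theorem abs_rpow_sub_cubic_taylor_le {μ t : ℝ} (hμ : 4 ≤ μ) (ht : 0 ≤ t) :
    |t ^ μ - 1 - μ * (t - 1) - μ * (μ - 1) / 2 * (t - 1) ^ 2
        - μ * (μ - 1) * (μ - 2) / 6 * (t - 1) ^ 3|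
      ≤ μ * (μ - 1) * (μ - 2) * (μ - 3) / 24 * (1 + t ^ (μ - 4)) * (t - 1) ^ 4 := by
  have h := abs_rpow_sub_taylor_le (μ := μ) (n := 3) (by norm_num; linarith) ht
  simp only [sum_range_succ, sum_range_zero, descPochhammer_eval_eq_prod_range, prod_range_succ,
    prod_range_zero, (by decide : Even 4).pow_abs] at h
  norm_num [factorial] at h
  convert h using 2
  ring

theorem stmt15 (a lam : ℝ) (ha : 0 < a) (hlam : 3 ≤ lam) (x : ℝ) (hx : 0 ≤ x) :
    |x ^ (lam + 1) / a ^ lam - a - (lam + 1) * (x - a)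
        - (lam * (lam + 1) / (2 * a)) * (x - a) ^ 2
        - ((lam - 1) * lam * (lam + 1) / (6 * a ^ 2)) * (x - a) ^ 3|
      ≤ ((lam - 2) * (lam - 1) * lam * (lam + 1) / 24) * (1 + (x / a) ^ (lam - 3))
          * (x - a) ^ 4 / a ^ 3 := by
  have h := mul_le_mul_of_nonneg_left
    (abs_rpow_sub_cubic_taylor_le (μ := lam + 1) (by linarith) (div_nonneg hx ha.le)) ha.le
  have habs (r : ℝ) : a * |r| = |a * r| := by rw [abs_mul, abs_of_pos ha]
  have hscale : x ^ (lam + 1) / a ^ lam = a * (x / a) ^ (lam + 1) := by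
    rw [div_rpow hx ha.le, rpow_add_one ha.ne']
    field_simp
  rw [habs, show lam + 1 - 4 = lam - 3 by ring] at h
  rw [hscale]
  generalize (x / a) ^ (lam + 1) = T at h ⊢
  generalize (x / a) ^ (lam - 3) = P at h ⊢
  refine (le_of_eq ?_).trans (h.trans_eq ?_)
  · congr 1
    field_simp
    ring
  · field_simp
    ring
end

section
/- Let a > 0 and λ ∈ (−1, 3) with λ ≠ 0. Then for all x ≥ 0, |x^{λ+1}/a^λ − a − (λ+1)(x−a) − (λ(λ+1)/(2a))(x−a)² − ((λ−1)λ(λ+1)/(6a²))(x−a)³| ≤ (|(λ−2)(λ−1)λ|/6) · (x−a)⁴/a³. -/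
/-!
Put `p = λ + 1` and `t = x / a`; homogeneity reduces the claim to `a = 1`, i.e. to bounding
`t ^ p` minus its cubic Taylor polynomial at `1`. For fixed `t`, let `g s` be the cubic Taylor
polynomial of `u ↦ u ^ p` centred at `s` and evaluated at `t`. Then `g t = t ^ p`, `g 1` is the
Taylor polynomial at `1`, and the derivative telescopes to
`g' s = p (p - 1) (p - 2) (p - 3) / 6 · s ^ (p - 4) (t - s) ^ 3`.
Because `s ^ (p - 4)` blows up at `0`, a Lagrange remainder does not give the bound for `t < 1`;
instead compare `g` with `ψ s = K / 6 · s ^ (p - 4) (s - t) ^ 4`, `K = |(p - 1)(p - 2)(p - 3)|`.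
One computes `ψ' s = K / 6 · s ^ (p - 5) (s - t) ^ 3 (p s + (4 - p) t)`, so for `p ≤ 4` the
function `ψ` is monotone between `t` and `1` with `|g'| ≤ |ψ'|` there; as `ψ t = 0`,
this gives `|g t - g 1| ≤ ψ 1 = K / 6 · (t - 1) ^ 4`.
-/

open Set

theorem abs_sub_le_sub_of_abs_deriv_le {g g' ψ ψ' : ℝ → ℝ} {A B : ℝ} (hAB : A ≤ B)
    (hg : ∀ s ∈ Icc A B, HasDerivAt g (g' s) s) (hψ : ∀ s ∈ Icc A B, HasDerivAt ψ (ψ' s) s)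
    (hle : ∀ s ∈ Icc A B, |g' s| ≤ ψ' s) : |g B - g A| ≤ ψ B - ψ A := by
  have hIco : ∀ s ∈ Ico A B, s ∈ Icc A B := fun s hs => Ico_subset_Icc_self hs
  exact image_norm_le_of_norm_deriv_right_le_deriv_boundary' (f := fun s => g s - g A)
    (B := fun s => ψ s - ψ A)
    (continuousOn_of_forall_continuousAt fun s hs => ((hg s hs).sub_const _).continuousAt)
    (fun s hs => ((hg s (hIco s hs)).sub_const _).hasDerivWithinAt) (by simp)
    (continuousOn_of_forall_continuousAt fun s hs => ((hψ s hs).sub_const _).continuousAt)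
    (fun s hs => ((hψ s (hIco s hs)).sub_const _).hasDerivWithinAt)
    (fun s hs => hle s (hIco s hs)) (right_mem_Icc.2 hAB)

noncomputable def rpowTaylorCubic (p t s : ℝ) : ℝ :=
  s ^ p + p * s ^ (p - 1) * (t - s) + p * (p - 1) / 2 * s ^ (p - 2) * (t - s) ^ 2
    + p * (p - 1) * (p - 2) / 6 * s ^ (p - 3) * (t - s) ^ 3

theorem hasDerivAt_rpowTaylorCubic (p t : ℝ) {s : ℝ} (hs : 0 < s) :
    HasDerivAt (rpowTaylorCubic p t)
      (p * (p - 1) * (p - 2) * (p - 3) / 6 * s ^ (p - 4) * (t - s) ^ 3) s := by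
  have hpow (q : ℝ) : HasDerivAt (fun s : ℝ => s ^ q) (q * s ^ (q - 1)) s :=
    Real.hasDerivAt_rpow_const (Or.inl hs.ne')
  have hsub : HasDerivAt (fun s : ℝ => t - s) (-1) s := (hasDerivAt_id s).const_sub t
  refine ((((hpow p).add (((hpow (p - 1)).const_mul p).mul hsub)).add
    ((((hpow (p - 2)).const_mul (p * (p - 1) / 2)).mul (hsub.pow 2)))).add
    (((hpow (p - 3)).const_mul (p * (p - 1) * (p - 2) / 6)).mul (hsub.pow 3))).congr_deriv ?_
  rw [show p - 1 - 1 = p - 2 by ring, show p - 2 - 1 = p - 3 by ring,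
    show p - 3 - 1 = p - 4 by ring, show p - 1 = p - 2 + 1 by ring,
    show p - 2 = p - 3 + 1 by ring, show p - 3 = p - 4 + 1 by ring]
  simp only [Real.rpow_add_one hs.ne', Pi.pow_apply, Nat.cast_ofNat]
  ring

theorem abs_rpowTaylorCubic_deriv_le {p t s : ℝ} (hp0 : 0 < p) (hp4 : p ≤ 4) (ht : 0 ≤ t)
    (hs : 0 < s) :
    |p * (p - 1) * (p - 2) * (p - 3) / 6 * s ^ (p - 4) * (t - s) ^ 3|
      ≤ |(p - 1) * (p - 2) * (p - 3)| / 6 * (s ^ (p - 5) * |s - t| ^ 3 * (p * s + (4 - p) * t)) := by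
  have hu : 0 < s ^ (p - 5) := Real.rpow_pos_of_pos hs _
  rw [show p - 4 = p - 5 + 1 by ring, Real.rpow_add_one hs.ne',
    show p * (p - 1) * (p - 2) * (p - 3) / 6 * (s ^ (p - 5) * s) * (t - s) ^ 3
      = p / 6 * (s ^ (p - 5) * s) * ((p - 1) * (p - 2) * (p - 3)) * (t - s) ^ 3 by ring,
    abs_mul, abs_mul, abs_of_pos (by positivity : 0 < p / 6 * (s ^ (p - 5) * s)),
    abs_pow, abs_sub_comm t s, ← sub_nonneg]
  have hrest : 0 ≤ |(p - 1) * (p - 2) * (p - 3)| / 6 * s ^ (p - 5) * |s - t| ^ 3 * ((4 - p) * t) :=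
    mul_nonneg (by positivity) (mul_nonneg (by linarith) ht)
  linarith

theorem hasDerivAt_rpow_mul_sub_pow_four (p t : ℝ) {s : ℝ} (hs : 0 < s) :
    HasDerivAt (fun s : ℝ => s ^ (p - 4) * (s - t) ^ 4)
      (s ^ (p - 5) * (s - t) ^ 3 * (p * s + (4 - p) * t)) s := by
  refine ((Real.hasDerivAt_rpow_const (p := p - 4) (Or.inl hs.ne')).mul
    (((hasDerivAt_id s).sub_const t).pow 4)).congr_deriv ?_
  rw [show p - 4 - 1 = p - 5 by ring, show p - 4 = p - 5 + 1 by ring,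
    Real.rpow_add_one hs.ne']
  simp only [id, Pi.pow_apply, Nat.cast_ofNat]
  ring

theorem abs_rpow_sub_taylorCubic_le {p t : ℝ} (hp0 : 0 < p) (hp4 : p ≤ 4) (ht : 0 ≤ t) :
    |t ^ p - 1 - p * (t - 1) - p * (p - 1) / 2 * (t - 1) ^ 2
        - p * (p - 1) * (p - 2) / 6 * (t - 1) ^ 3|
      ≤ |(p - 1) * (p - 2) * (p - 3)| / 6 * (t - 1) ^ 4 := by
  rcases ht.eq_or_lt with rfl | ht0
  · rw [Real.zero_rpow hp0.ne', show (0 : ℝ) - 1 - p * (0 - 1) - p * (p - 1) / 2 * (0 - 1) ^ 2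
      - p * (p - 1) * (p - 2) / 6 * (0 - 1) ^ 3 = (p - 1) * (p - 2) * (p - 3) / 6 by ring]
    norm_num [abs_div]
  set K := |(p - 1) * (p - 2) * (p - 3)|
  set ψ : ℝ → ℝ := fun s => K / 6 * (s ^ (p - 4) * (s - t) ^ 4)
  have hg (s : ℝ) (hs : 0 < s) := hasDerivAt_rpowTaylorCubic p t hs
  have hψ (s : ℝ) (hs : 0 < s) :
      HasDerivAt ψ (K / 6 * (s ^ (p - 5) * (s - t) ^ 3 * (p * s + (4 - p) * t))) s :=
    (hasDerivAt_rpow_mul_sub_pow_four p t hs).const_mul (K / 6)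
  have hle (s : ℝ) (hs : 0 < s) := abs_rpowTaylorCubic_deriv_le hp0 hp4 ht hs
  have hψt : ψ t = 0 := by simp [ψ]
  have key : |rpowTaylorCubic p t t - rpowTaylorCubic p t 1| ≤ ψ 1 := by
    rcases le_total t 1 with h | h
    · have := abs_sub_le_sub_of_abs_deriv_le h (fun s hs => hg s (ht0.trans_le hs.1))
        (fun s hs => hψ s (ht0.trans_le hs.1)) fun s hs => (hle s (ht0.trans_le hs.1)).trans_eq
          (by rw [abs_of_nonneg (sub_nonneg.2 hs.1)])
      rwa [abs_sub_comm, hψt, sub_zero] at this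
    · have := abs_sub_le_sub_of_abs_deriv_le h (fun s hs => hg s (one_pos.trans_le hs.1))
        (fun s hs => (hψ s (one_pos.trans_le hs.1)).neg) fun s hs =>
          (hle s (one_pos.trans_le hs.1)).trans_eq
          (by rw [abs_of_nonpos (sub_nonpos.2 hs.2)]; ring)
      rwa [Pi.neg_apply, Pi.neg_apply, hψt, neg_zero, zero_sub, neg_neg] at this
  convert key using 2
  · simp only [rpowTaylorCubic, sub_self, ne_eq, OfNat.ofNat_ne_zero, not_false_eq_true,
      zero_pow, mul_zero, add_zero, Real.one_rpow, mul_one]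
    ring
  · simp only [Real.one_rpow, one_mul]
    ring

theorem stmt16_general (a lam : ℝ) (ha : 0 < a) (hlam1 : -1 < lam) (hlam3 : lam < 3)
    (x : ℝ) (hx : 0 ≤ x) :
    |x ^ (lam + 1) / a ^ lam - a - (lam + 1) * (x - a)
        - (lam * (lam + 1) / (2 * a)) * (x - a) ^ 2
        - ((lam - 1) * lam * (lam + 1) / (6 * a ^ 2)) * (x - a) ^ 3|
      ≤ (|(lam - 2) * (lam - 1) * lam| / 6) * (x - a) ^ 4 / a ^ 3 := by
  have hnorm := abs_rpow_sub_taylorCubic_le (p := lam + 1) (t := x / a) (by linarith) (by linarith)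
    (div_nonneg hx ha.le)
  have hrpow : (x / a) ^ (lam + 1) = x ^ (lam + 1) / a ^ lam / a := by
    rw [Real.div_rpow hx ha.le, Real.rpow_add_one ha.ne', div_div]
  rw [hrpow, show lam + 1 - 1 = lam by ring, show lam + 1 - 2 = lam - 1 by ring,
    show lam + 1 - 3 = lam - 2 by ring] at hnorm
  calc _ = |a * (x ^ (lam + 1) / a ^ lam / a - 1 - (lam + 1) * (x / a - 1)
        - (lam + 1) * lam / 2 * (x / a - 1) ^ 2
        - (lam + 1) * lam * (lam - 1) / 6 * (x / a - 1) ^ 3)| := by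
          congr 1; field_simp
    _ ≤ a * (|lam * (lam - 1) * (lam - 2)| / 6 * (x / a - 1) ^ 4) := by
          rw [abs_mul, abs_of_pos ha]; gcongr
    _ = _ := by
      rw [show lam * (lam - 1) * (lam - 2) = (lam - 2) * (lam - 1) * lam by ring]
      field_simp

theorem stmt16 (a lam : ℝ) (ha : 0 < a) (hlam1 : -1 < lam) (hlam3 : lam < 3) (hlam0 : lam ≠ 0)
    (x : ℝ) (hx : 0 ≤ x) :
    |x ^ (lam + 1) / a ^ lam - a - (lam + 1) * (x - a)
        - (lam * (lam + 1) / (2 * a)) * (x - a) ^ 2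
        - ((lam - 1) * lam * (lam + 1) / (6 * a ^ 2)) * (x - a) ^ 3|
      ≤ (|(lam - 2) * (lam - 1) * lam| / 6) * (x - a) ^ 4 / a ^ 3 :=
  stmt16_general a lam ha hlam1 hlam3 x hx
end

section
/- Let a > 0. Then for all x ≥ 0, |2x log(x/a) − 2(x−a) − (x−a)²/a| ≤ |x−a|³/a². -/
/-!
Substituting `x = a t` scales both sides by `a`, so it suffices to bound
`f t = 2 t log t - 2 (t - 1) - (t - 1)²` by `|t - 1|³` for `t ≥ 0`. With
`p t = (t - 1)(3 - t) / 2` and `q t = t² / 2 - t + 3 / 2 - 1 / t = (t - 1)(t² - t + 2) / (2 t)`,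
`f t + (t - 1)³ = 2 t (log t - p t)` and `(t - 1)³ - f t = 2 t (q t - log t)`.
Both `log - p` and `q - log` are increasing on `(0, ∞)`, with derivatives `(t - 1)² / t` and
`(t - 1)² (t + 1) / t²`, and vanish at `1`; hence `(t - 1) (f t + (t - 1)³)` and
`(t - 1) ((t - 1)³ - f t)` are nonnegative, which forces `|f t| ≤ |t - 1|³`.
-/

open Real Set

lemma MonotoneOn.sub_mul_sub_nonneg {s : Set ℝ} {f : ℝ → ℝ} (hf : MonotoneOn f s)
    {a b : ℝ} (ha : a ∈ s) (hb : b ∈ s) : 0 ≤ (b - a) * (f b - f a) := by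
  rcases le_total a b with hab | hba
  · exact mul_nonneg (sub_nonneg.2 hab) (sub_nonneg.2 (hf ha hb hab))
  · exact mul_nonneg_of_nonpos_of_nonpos (sub_nonpos.2 hba) (sub_nonpos.2 (hf hb ha hba))

lemma monotoneOn_Ioi_of_hasDerivAt_nonneg {f f' : ℝ → ℝ}
    (hf : ∀ t ∈ Ioi (0 : ℝ), HasDerivAt f (f' t) t) (hf' : ∀ t ∈ Ioi (0 : ℝ), 0 ≤ f' t) :
    MonotoneOn f (Ioi 0) :=
  monotoneOn_of_hasDerivWithinAt_nonneg (convex_Ioi 0)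
    (fun t ht ↦ (hf t ht).continuousAt.continuousWithinAt)
    (fun t ht ↦ (hf t (interior_subset ht)).hasDerivWithinAt)
    (fun t ht ↦ hf' t (interior_subset ht))

lemma monotoneOn_log_sub : MonotoneOn (fun t ↦ log t - (t - 1) * (3 - t) / 2) (Ioi 0) := by
  refine monotoneOn_Ioi_of_hasDerivAt_nonneg (f' := fun t ↦ (t - 1) ^ 2 / t)
    (fun t ht ↦ ?_) (fun t ht ↦ by have : 0 < t := ht; positivity)
  have ht : t ≠ 0 := ne_of_gt ht
  have hp := (((hasDerivAt_id' t).sub_const 1).mul ((hasDerivAt_id' t).const_sub 3)).div_const 2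
  exact ((hasDerivAt_log ht).sub hp).congr_deriv (by field_simp; ring)

lemma monotoneOn_sub_log : MonotoneOn (fun t ↦ t ^ 2 / 2 - t + 3 / 2 - t⁻¹ - log t) (Ioi 0) := by
  refine monotoneOn_Ioi_of_hasDerivAt_nonneg (f' := fun t ↦ (t - 1) ^ 2 * (t + 1) / t ^ 2)
    (fun t ht ↦ ?_) (fun t ht ↦ by have : 0 < t := ht; positivity)
  have ht : t ≠ 0 := ne_of_gt ht
  have hq := ((((hasDerivAt_pow 2 t).div_const 2).sub (hasDerivAt_id' t)).add_const (3 / 2)).sub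
    (hasDerivAt_inv ht)
  exact (hq.sub (hasDerivAt_log ht)).congr_deriv (by field_simp; ring)

lemma abs_two_mul_mul_log_sub_le {t : ℝ} (ht : 0 ≤ t) :
    |2 * t * log t - 2 * (t - 1) - (t - 1) ^ 2| ≤ |t - 1| ^ 3 := by
  rcases ht.eq_or_lt with rfl | ht
  · norm_num
  have hp : 0 ≤ (t - 1) * (log t - (t - 1) * (3 - t) / 2) := by
    simpa using monotoneOn_log_sub.sub_mul_sub_nonneg (mem_Ioi.2 one_pos) (mem_Ioi.2 ht)
  have hq : 0 ≤ (t - 1) * (t ^ 2 / 2 - t + 3 / 2 - t⁻¹ - log t) := by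
    convert monotoneOn_sub_log.sub_mul_sub_nonneg (mem_Ioi.2 one_pos) (mem_Ioi.2 ht) using 2
    norm_num
  set f := 2 * t * log t - 2 * (t - 1) - (t - 1) ^ 2
  have hf_add : 0 ≤ (t - 1) * (f + (t - 1) ^ 3) := by
    have : (t - 1) * (f + (t - 1) ^ 3) = 2 * t * ((t - 1) * (log t - (t - 1) * (3 - t) / 2)) := by
      ring
    rw [this]; positivity
  have hf_sub : 0 ≤ (t - 1) * ((t - 1) ^ 3 - f) := by
    have : (t - 1) * ((t - 1) ^ 3 - f)
        = 2 * t * ((t - 1) * (t ^ 2 / 2 - t + 3 / 2 - t⁻¹ - log t)) := by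
      field_simp; ring
    rw [this]; positivity
  rw [abs_le]
  rcases lt_trichotomy t 1 with h1 | rfl | h1
  · rw [abs_of_neg (by linarith)]
    constructor <;> nlinarith
  · simp [f]
  · rw [abs_of_pos (by linarith)]
    constructor <;> nlinarith

theorem stmt17 (a : ℝ) (ha : 0 < a) (x : ℝ) (hx : 0 ≤ x) :
    |2 * x * Real.log (x / a) - 2 * (x - a) - (x - a) ^ 2 / a| ≤ |x - a| ^ 3 / a ^ 2 := by
  obtain ⟨t, ht, rfl⟩ : ∃ t, 0 ≤ t ∧ x = a * t := ⟨x / a, by positivity, by field_simp⟩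
  have hlhs : 2 * (a * t) * log (a * t / a) - 2 * (a * t - a) - (a * t - a) ^ 2 / a
      = a * (2 * t * log t - 2 * (t - 1) - (t - 1) ^ 2) := by
    rw [mul_div_cancel_left₀ t ha.ne']
    field_simp
  have hrhs : |a * t - a| ^ 3 / a ^ 2 = a * |t - 1| ^ 3 := by
    rw [← mul_sub_one, abs_mul, abs_of_pos ha]
    field_simp
  rw [hlhs, hrhs, abs_mul, abs_of_pos ha]
  exact mul_le_mul_of_nonneg_left (abs_two_mul_mul_log_sub_le ht) ha.le
end

section
/- Let a > 0 and λ ≥ 2. Then for all x ≥ 0, |x^{λ+1}/a^λ − a − (λ+1)(x−a) − (λ(λ+1)/(2a))(x−a)²| ≤ ((λ−1)λ(λ+1)/6) · (1 + (x/a)^{λ−2}) · |x−a|³/a². -/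
/-!
Since `x ^ (λ + 1) / a ^ λ = a * (x / a) ^ (λ + 1)`, the left-hand side is the second-order Taylor
remainder at `a` of `f t = a * (t / a) ^ (λ + 1)`, whose third derivative is
`(λ + 1) λ (λ - 1) / a ^ 2 * (t / a) ^ (λ - 2)`. For `λ ≥ 2` the power `(t / a) ^ (λ - 2)` is
monotone, so between `a` and `x` it is at most `1 + (x / a) ^ (λ - 2)`, and the Lagrange bound
`sup |f'''| * |x - a| ^ 3 / 6` gives the claim. The Taylor bound is obtained by integrating the derivative
bound three times, each time via the comparison principle for `|h| ≤ C |t - a| ^ (k + 1) / (k + 1)`.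
-/

open Set

theorem abs_le_of_abs_deriv_le_mul_abs_sub_pow_of_le {h h' : ℝ → ℝ} {a b C : ℝ} {k : ℕ}
    (hab : a ≤ b) (hd : ∀ t ∈ Icc a b, HasDerivAt h (h' t) t)
    (hbound : ∀ t ∈ Icc a b, |h' t| ≤ C * |t - a| ^ k) (h0 : h a = 0) :
    |h b| ≤ C * |b - a| ^ (k + 1) / (k + 1) := by
  have hB (t : ℝ) :
      HasDerivAt (fun t => C * (t - a) ^ (k + 1) / (k + 1)) (C * (t - a) ^ k) t := by
    refine (((hasDerivAt_id t).sub_const a).fun_pow (k + 1)).const_mul C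
      |>.div_const ((k : ℝ) + 1) |>.congr_deriv ?_
    push_cast
    field_simp
    simp
  have := image_norm_le_of_norm_deriv_right_le_deriv_boundary
    (fun t ht => (hd t ht).continuousAt.continuousWithinAt)
    (fun t ht => (hd t (Ico_subset_Icc_self ht)).hasDerivWithinAt) (by simp [h0]) hB
    (fun t ht => by
      simpa [abs_of_nonneg (sub_nonneg.2 ht.1)] using hbound t (Ico_subset_Icc_self ht))
    (right_mem_Icc.2 hab)
  simpa [abs_of_nonneg (sub_nonneg.2 hab)] using this

theorem abs_le_of_abs_deriv_le_mul_abs_sub_pow {h h' : ℝ → ℝ} {a b C : ℝ} {k : ℕ}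
    (hd : ∀ t ∈ uIcc a b, HasDerivAt h (h' t) t)
    (hbound : ∀ t ∈ uIcc a b, |h' t| ≤ C * |t - a| ^ k) (h0 : h a = 0) :
    |h b| ≤ C * |b - a| ^ (k + 1) / (k + 1) := by
  rcases le_total a b with hab | hba
  · rw [uIcc_of_le hab] at hd hbound
    exact abs_le_of_abs_deriv_le_mul_abs_sub_pow_of_le hab hd hbound h0
  · rw [uIcc_of_ge hba] at hd hbound
    have hmem {t : ℝ} (ht : t ∈ Icc (-a) (-b)) : -t ∈ Icc b a :=
      ⟨by linarith [ht.2], by linarith [ht.1]⟩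
    have := abs_le_of_abs_deriv_le_mul_abs_sub_pow_of_le (h := fun s => h (-s))
      (h' := fun s => -h' (-s)) (C := C) (k := k) (neg_le_neg hba)
      (fun t ht => by
        simpa [Function.comp_def] using (hd (-t) (hmem ht)).comp t (hasDerivAt_neg t))
      (fun t ht => by
        simpa [abs_neg, abs_sub_comm, add_comm] using hbound (-t) (hmem ht))
      (by simpa using h0)
    simpa [abs_sub_comm, neg_add_eq_sub] using this

theorem abs_taylor_remainder_two_le {f f' f'' f''' : ℝ → ℝ} {a x M : ℝ}
    (hf : ∀ t ∈ uIcc a x, HasDerivAt f (f' t) t)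
    (hf' : ∀ t ∈ uIcc a x, HasDerivAt f' (f'' t) t)
    (hf'' : ∀ t ∈ uIcc a x, HasDerivAt f'' (f''' t) t)
    (hM : ∀ t ∈ uIcc a x, |f''' t| ≤ M) :
    |f x - f a - f' a * (x - a) - f'' a / 2 * (x - a) ^ 2| ≤ M * |x - a| ^ 3 / 6 := by
  have hsub {t : ℝ} (ht : t ∈ uIcc a x) : uIcc a t ⊆ uIcc a x :=
    uIcc_subset_uIcc left_mem_uIcc ht
  have hlin (s : ℝ) (c : ℝ) : HasDerivAt (fun s => c * (s - a)) c s := by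
    simpa using ((hasDerivAt_id s).sub_const a).const_mul c
  have hquad (s : ℝ) (c : ℝ) : HasDerivAt (fun s => c / 2 * (s - a) ^ 2) (c * (s - a)) s := by
    refine ((((hasDerivAt_id' s).sub_const a).fun_pow 2).const_mul (c / 2)).congr_deriv ?_
    norm_num
    ring
  have h2 (t : ℝ) (ht : t ∈ uIcc a x) : |f'' t - f'' a| ≤ M * |t - a| := by
    simpa using abs_le_of_abs_deriv_le_mul_abs_sub_pow (k := 0)
      (fun s hs => (hf'' s (hsub ht hs)).sub_const (f'' a))
      (fun s hs => by simpa using hM s (hsub ht hs)) (sub_self _)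
  have h1 (t : ℝ) (ht : t ∈ uIcc a x) :
      |f' t - f' a - f'' a * (t - a)| ≤ M / 2 * |t - a| ^ 2 := by
    convert abs_le_of_abs_deriv_le_mul_abs_sub_pow (k := 1)
      (fun s hs => ((hf' s (hsub ht hs)).sub_const (f' a)).fun_sub (hlin s (f'' a)))
      (fun s hs => by simpa using h2 s (hsub ht hs)) (by simp) using 1
    ring
  convert abs_le_of_abs_deriv_le_mul_abs_sub_pow (k := 2)
    (fun s hs => (((hf s hs).sub_const (f a)).fun_sub (hlin s (f' a))).fun_sub (hquad s (f'' a)))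
    h1 (by simp) using 1
  ring

theorem hasDerivAt_div_const_rpow {a p : ℝ} (hp : 1 ≤ p) (t : ℝ) :
    HasDerivAt (fun t => (t / a) ^ p) (p / a * (t / a) ^ (p - 1)) t := by
  refine ((Real.hasDerivAt_rpow_const (Or.inr hp)).comp t
    ((hasDerivAt_id' t).div_const a)).congr_deriv ?_
  ring

theorem rpow_le_add_rpow_of_mem_uIcc {b c s p : ℝ} (hb : 0 ≤ b) (hc : 0 ≤ c) (hp : 0 ≤ p)
    (hs : s ∈ uIcc b c) : s ^ p ≤ b ^ p + c ^ p := by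
  have hs0 : 0 ≤ s := le_trans (le_inf hb hc) hs.1
  rcases le_total b c with hbc | hcb
  · have := Real.rpow_le_rpow hs0 (hs.2.trans (max_le hbc le_rfl)) hp
    linarith [Real.rpow_nonneg hb p]
  · have := Real.rpow_le_rpow hs0 (hs.2.trans (max_le le_rfl hcb)) hp
    linarith [Real.rpow_nonneg hc p]

theorem abs_taylor_remainder_two_mul_div_rpow_le {a p x : ℝ} (ha : 0 < a) (hp : 2 ≤ p)
    (hx : 0 ≤ x) :
    |a * (x / a) ^ (p + 1) - a - (p + 1) * (x - a) - (p + 1) * p / a / 2 * (x - a) ^ 2|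
      ≤ (p + 1) * p * (p - 1) / a ^ 2 * (1 + (x / a) ^ (p - 2)) * |x - a| ^ 3 / 6 := by
  have hf (t : ℝ) : HasDerivAt (fun t => a * (t / a) ^ (p + 1)) ((p + 1) * (t / a) ^ p) t := by
    refine ((hasDerivAt_div_const_rpow (by linarith) t).const_mul a).congr_deriv ?_
    rw [add_sub_cancel_right]
    field_simp
  have hf' (t : ℝ) : HasDerivAt (fun t => (p + 1) * (t / a) ^ p)
      ((p + 1) * p / a * (t / a) ^ (p - 1)) t := by
    refine ((hasDerivAt_div_const_rpow (by linarith) t).const_mul (p + 1)).congr_deriv ?_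
    ring
  have hf'' (t : ℝ) : HasDerivAt (fun t => (p + 1) * p / a * (t / a) ^ (p - 1))
      ((p + 1) * p * (p - 1) / a ^ 2 * (t / a) ^ (p - 2)) t := by
    refine ((hasDerivAt_div_const_rpow (by linarith) t).const_mul
      ((p + 1) * p / a)).congr_deriv ?_
    rw [show p - 1 - 1 = p - 2 by ring]
    ring
  have hM (t : ℝ) (ht : t ∈ uIcc a x) :
      |(p + 1) * p * (p - 1) / a ^ 2 * (t / a) ^ (p - 2)|
        ≤ (p + 1) * p * (p - 1) / a ^ 2 * (1 + (x / a) ^ (p - 2)) := by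
    have hta : t / a ∈ uIcc 1 (x / a) := by
      rw [← div_self ha.ne', ← image_div_const_uIcc]
      exact mem_image_of_mem _ ht
    have hcoef : 0 ≤ (p + 1) * p * (p - 1) / a ^ 2 := by
      have : 0 ≤ p - 1 := by linarith
      positivity
    have hta0 : 0 ≤ t / a := le_trans (le_inf zero_le_one (div_nonneg hx ha.le)) hta.1
    rw [abs_of_nonneg (mul_nonneg hcoef (Real.rpow_nonneg hta0 _))]
    gcongr
    simpa using rpow_le_add_rpow_of_mem_uIcc zero_le_one (div_nonneg hx ha.le) (by linarith) hta
  simpa [div_self ha.ne'] using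
    abs_taylor_remainder_two_le (fun t _ => hf t) (fun t _ => hf' t) (fun t _ => hf'' t) hM

theorem stmt18 (a lam : ℝ) (ha : 0 < a) (hlam : 2 ≤ lam) (x : ℝ) (hx : 0 ≤ x) :
    |x ^ (lam + 1) / a ^ lam - a - (lam + 1) * (x - a)
        - (lam * (lam + 1) / (2 * a)) * (x - a) ^ 2|
      ≤ ((lam - 1) * lam * (lam + 1) / 6) * (1 + (x / a) ^ (lam - 2))
          * |x - a| ^ 3 / a ^ 2 := by
  have hscale : x ^ (lam + 1) / a ^ lam = a * (x / a) ^ (lam + 1) := by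
    rw [Real.div_rpow hx ha.le, Real.rpow_add_one ha.ne']
    field_simp
  rw [hscale]
  convert abs_taylor_remainder_two_mul_div_rpow_le ha hlam hx using 1
  · congr 1; ring
  · ring
end

section
/- Let a > 0 and λ ∈ (−1, 2) with λ ≠ 0. Then for all x ≥ 0, |x^{λ+1}/a^λ − a − (λ+1)(x−a) − (λ(λ+1)/(2a))(x−a)²| ≤ (|(λ−1)λ|/2) · |x−a|³/a². -/
/-!
Put `p = λ + 1 ∈ (0, 3)` and `t = x / a`; after scaling, the claim is
`|R(t)| ≤ C |t - 1|³` with `C = |(p - 1)(p - 2)| / 2`, where `R` is the second order Taylor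
remainder of `z ↦ z ^ p` at `1`. A Taylor remainder is controlled by the third derivative alone:
if `|f'''| ≤ g'''` between `1` and `t`, then `|R_f(t)| ≤ |R_g(t)|`. For `t ≥ 1` compare with
`C (z - 1)³`, since `p |(p - 1)(p - 2)| z ^ (p - 3) ≤ 6 C` there. For `t < 1` the third derivative
of `z ^ p` blows up at `0`, so compare instead with `± (1 - t) ^ (3 - p) (z - t) ^ p`, the power
transported from `[0, 1]` to `[t, 1]`: its third derivative dominates because
`(z - t) / (1 - t) ≤ z` and `p ≤ 3`, and its remainder at `t` is exactly `C (1 - t)³`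
(the case `t = 0` is the equality case).
-/

open Set

lemma le_of_hasDerivAt_nonneg {f f' : ℝ → ℝ} {a b : ℝ} (hab : a ≤ b)
    (hf : ContinuousOn f (Icc a b)) (hd : ∀ y ∈ Ioo a b, HasDerivAt f (f' y) y)
    (h : ∀ y ∈ Ioo a b, 0 ≤ f' y) : f a ≤ f b := by
  refine monotoneOn_of_hasDerivWithinAt_nonneg (f' := f') (convex_Icc a b) hf ?_ ?_
    (left_mem_Icc.2 hab) (right_mem_Icc.2 hab) hab
  · rw [interior_Icc]
    exact fun y hy => (hd y hy).hasDerivWithinAt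
  · rwa [interior_Icc]

noncomputable def taylorRemainder₂ (f f₁ f₂ : ℝ → ℝ) (x₀ x : ℝ) : ℝ :=
  f x - f x₀ - f₁ x₀ * (x - x₀) - f₂ x₀ / 2 * (x - x₀) ^ 2

section ThirdDerivative

variable {f f₁ f₂ f₃ g g₁ g₂ g₃ : ℝ → ℝ} {x x₀ : ℝ}

theorem taylorRemainder₂_nonpos (hx : x ≤ x₀) (hf : ContinuousOn f (Icc x x₀))
    (hf₁ : ∀ y ∈ Ioc x x₀, HasDerivAt f (f₁ y) y)
    (hf₂ : ∀ y ∈ Ioc x x₀, HasDerivAt f₁ (f₂ y) y)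
    (hf₃ : ∀ y ∈ Ioc x x₀, HasDerivAt f₂ (f₃ y) y)
    (h : ∀ y ∈ Ioo x x₀, 0 ≤ f₃ y) : taylorRemainder₂ f f₁ f₂ x₀ x ≤ 0 := by
  have hIcc {y} (hy : y ∈ Ioc x x₀) : Icc y x₀ ⊆ Ioc x x₀ :=
    Icc_subset_Ioc_iff hy.2 |>.2 ⟨hy.1, le_rfl⟩
  have hf₂_le : ∀ y ∈ Ioc x x₀, f₂ y ≤ f₂ x₀ := fun y hy =>
    le_of_hasDerivAt_nonneg hy.2
      (fun z hz => (hf₃ z (hIcc hy hz)).continuousAt.continuousWithinAt)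
      (fun z hz => hf₃ z (hIcc hy (Ioo_subset_Icc_self hz)))
      (fun z hz => h z ⟨hy.1.trans hz.1, hz.2⟩)
  have hf₁_ge : ∀ y ∈ Ioc x x₀, f₁ x₀ + f₂ x₀ * (y - x₀) ≤ f₁ y := by
    intro y hy
    have hd : ∀ z ∈ Icc y x₀, HasDerivAt (fun z => f₂ x₀ * z - f₁ z) (f₂ x₀ - f₂ z) z :=
      fun z hz => by
        simpa using ((hasDerivAt_id' z).const_mul (f₂ x₀)).fun_sub (hf₂ z (hIcc hy hz))
    have := le_of_hasDerivAt_nonneg hy.2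
      (fun z hz => (hd z hz).continuousAt.continuousWithinAt)
      (fun z hz => hd z (Ioo_subset_Icc_self hz))
      (fun z hz => sub_nonneg.2 (hf₂_le z (hIcc hy (Ioo_subset_Icc_self hz))))
    linarith
  have hd : ∀ z ∈ Ioo x x₀, HasDerivAt (fun z => f z - f₁ x₀ * z - f₂ x₀ / 2 * (z - x₀) ^ 2)
      (f₁ z - f₁ x₀ - f₂ x₀ * (z - x₀)) z := by
    intro z hz
    have := (((hf₁ z (Ioo_subset_Ioc_self hz)).sub ((hasDerivAt_id' z).const_mul (f₁ x₀))).sub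
      ((((hasDerivAt_id' z).sub_const x₀).pow 2).const_mul (f₂ x₀ / 2)))
    exact this.congr_deriv (by push_cast; ring)
  have := le_of_hasDerivAt_nonneg hx (by fun_prop) hd
    (fun z hz => by linarith [hf₁_ge z (Ioo_subset_Ioc_self hz)])
  simp only [taylorRemainder₂]
  linarith

theorem taylorRemainder₂_nonneg (hx : x₀ ≤ x) (hf : ContinuousOn f (Icc x₀ x))
    (hf₁ : ∀ y ∈ Ico x₀ x, HasDerivAt f (f₁ y) y)
    (hf₂ : ∀ y ∈ Ico x₀ x, HasDerivAt f₁ (f₂ y) y)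
    (hf₃ : ∀ y ∈ Ico x₀ x, HasDerivAt f₂ (f₃ y) y)
    (h : ∀ y ∈ Ioo x₀ x, 0 ≤ f₃ y) : 0 ≤ taylorRemainder₂ f f₁ f₂ x₀ x := by
  have mem {y} (hy : y ∈ Ioc (-x) (-x₀)) : -y ∈ Ico x₀ x := ⟨le_neg.2 hy.2, neg_lt.2 hy.1⟩
  have reflect := taylorRemainder₂_nonpos (f := fun z => -f (-z)) (f₁ := fun z => f₁ (-z))
    (f₂ := fun z => -f₂ (-z)) (f₃ := fun z => f₃ (-z)) (neg_le_neg hx)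
    (hf.comp continuous_neg.continuousOn fun y hy => ⟨le_neg.2 hy.2, neg_le.1 hy.1⟩).neg
    (fun y hy => ((hf₁ _ (mem hy)).comp y (hasDerivAt_neg y)).neg.congr_deriv (by ring))
    (fun y hy => ((hf₂ _ (mem hy)).comp y (hasDerivAt_neg y)).congr_deriv (by ring))
    (fun y hy => ((hf₃ _ (mem hy)).comp y (hasDerivAt_neg y)).neg.congr_deriv (by ring))
    (fun y hy => h _ ⟨lt_neg.2 hy.2, neg_lt.1 hy.1⟩)
  simp only [taylorRemainder₂, neg_neg] at reflect ⊢
  linarith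

theorem abs_taylorRemainder₂_le_neg (hx : x ≤ x₀)
    (hf : ContinuousOn f (Icc x x₀)) (hg : ContinuousOn g (Icc x x₀))
    (hf₁ : ∀ y ∈ Ioc x x₀, HasDerivAt f (f₁ y) y) (hg₁ : ∀ y ∈ Ioc x x₀, HasDerivAt g (g₁ y) y)
    (hf₂ : ∀ y ∈ Ioc x x₀, HasDerivAt f₁ (f₂ y) y) (hg₂ : ∀ y ∈ Ioc x x₀, HasDerivAt g₁ (g₂ y) y)
    (hf₃ : ∀ y ∈ Ioc x x₀, HasDerivAt f₂ (f₃ y) y) (hg₃ : ∀ y ∈ Ioc x x₀, HasDerivAt g₂ (g₃ y) y)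
    (h : ∀ y ∈ Ioo x x₀, |f₃ y| ≤ g₃ y) :
    |taylorRemainder₂ f f₁ f₂ x₀ x| ≤ -taylorRemainder₂ g g₁ g₂ x₀ x := by
  have hadd := taylorRemainder₂_nonpos hx (hg.add hf)
    (fun y hy => (hg₁ y hy).add (hf₁ y hy)) (fun y hy => (hg₂ y hy).add (hf₂ y hy))
    (fun y hy => (hg₃ y hy).add (hf₃ y hy)) (fun y hy => by linarith [neg_abs_le (f₃ y), h y hy])
  have hsub := taylorRemainder₂_nonpos hx (hg.sub hf)
    (fun y hy => (hg₁ y hy).sub (hf₁ y hy)) (fun y hy => (hg₂ y hy).sub (hf₂ y hy))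
    (fun y hy => (hg₃ y hy).sub (hf₃ y hy)) (fun y hy => by linarith [le_abs_self (f₃ y), h y hy])
  simp only [taylorRemainder₂, Pi.add_apply, Pi.sub_apply] at hadd hsub ⊢
  rw [abs_le]
  constructor <;> linarith

theorem abs_taylorRemainder₂_le (hx : x₀ ≤ x)
    (hf : ContinuousOn f (Icc x₀ x)) (hg : ContinuousOn g (Icc x₀ x))
    (hf₁ : ∀ y ∈ Ico x₀ x, HasDerivAt f (f₁ y) y) (hg₁ : ∀ y ∈ Ico x₀ x, HasDerivAt g (g₁ y) y)
    (hf₂ : ∀ y ∈ Ico x₀ x, HasDerivAt f₁ (f₂ y) y) (hg₂ : ∀ y ∈ Ico x₀ x, HasDerivAt g₁ (g₂ y) y)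
    (hf₃ : ∀ y ∈ Ico x₀ x, HasDerivAt f₂ (f₃ y) y) (hg₃ : ∀ y ∈ Ico x₀ x, HasDerivAt g₂ (g₃ y) y)
    (h : ∀ y ∈ Ioo x₀ x, |f₃ y| ≤ g₃ y) :
    |taylorRemainder₂ f f₁ f₂ x₀ x| ≤ taylorRemainder₂ g g₁ g₂ x₀ x := by
  have hadd := taylorRemainder₂_nonneg hx (hg.add hf)
    (fun y hy => (hg₁ y hy).add (hf₁ y hy)) (fun y hy => (hg₂ y hy).add (hf₂ y hy))
    (fun y hy => (hg₃ y hy).add (hf₃ y hy)) (fun y hy => by linarith [neg_abs_le (f₃ y), h y hy])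
  have hsub := taylorRemainder₂_nonneg hx (hg.sub hf)
    (fun y hy => (hg₁ y hy).sub (hf₁ y hy)) (fun y hy => (hg₂ y hy).sub (hf₂ y hy))
    (fun y hy => (hg₃ y hy).sub (hf₃ y hy)) (fun y hy => by linarith [le_abs_self (f₃ y), h y hy])
  simp only [taylorRemainder₂, Pi.add_apply, Pi.sub_apply] at hadd hsub ⊢
  rw [abs_le]
  constructor <;> linarith

end ThirdDerivative

lemma hasDerivAt_const_mul_sub_rpow (c s q : ℝ) {y : ℝ} (hy : s < y) :
    HasDerivAt (fun z => c * (z - s) ^ q) (c * q * (y - s) ^ (q - 1)) y := by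
  have := ((Real.hasDerivAt_rpow_const (p := q) (Or.inl (sub_pos.2 hy).ne')).comp y
    ((hasDerivAt_id' y).sub_const s)).const_mul c
  exact this.congr_deriv (by ring)

lemma continuous_const_mul_sub_rpow (c s : ℝ) {q : ℝ} (hq : 0 ≤ q) :
    Continuous fun z : ℝ => c * (z - s) ^ q := by
  fun_prop (disch := simp [hq])

section RpowTaylor

variable {p t : ℝ}

theorem abs_rpow_sub_taylor₂_le_of_one_le (hp : 0 < p) (hp3 : p ≤ 3) (ht : 1 ≤ t) :
    |t ^ p - 1 - p * (t - 1) - p * (p - 1) / 2 * (t - 1) ^ 2|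
      ≤ |(p - 1) * (p - 2)| / 2 * (t - 1) ^ 3 := by
  set C := |(p - 1) * (p - 2)| / 2
  have hpos {y} (hy : y ∈ Ico 1 t) : 0 < y := by linarith [hy.1]
  have hg₁ (y : ℝ) : HasDerivAt (fun z => C * (z - 1) ^ 3) (3 * C * (y - 1) ^ 2) y :=
    ((((hasDerivAt_id' y).sub_const 1).fun_pow 3).const_mul C).congr_deriv (by push_cast; ring)
  have hg₂ (y : ℝ) : HasDerivAt (fun z => 3 * C * (z - 1) ^ 2) (6 * C * (y - 1)) y :=
    ((((hasDerivAt_id' y).sub_const 1).fun_pow 2).const_mul (3 * C)).congr_deriv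
      (by push_cast; ring)
  have hg₃ (y : ℝ) : HasDerivAt (fun z => 6 * C * (z - 1)) (6 * C) y :=
    (((hasDerivAt_id' y).sub_const 1).const_mul (6 * C)).congr_deriv (by ring)
  have hcube := abs_taylorRemainder₂_le ht
    (continuous_const_mul_sub_rpow 1 0 hp.le).continuousOn
    (by fun_prop : Continuous fun z : ℝ => C * (z - 1) ^ 3).continuousOn
    (fun y hy => hasDerivAt_const_mul_sub_rpow 1 0 p (hpos hy)) (fun y _ => hg₁ y)
    (fun y hy => hasDerivAt_const_mul_sub_rpow _ 0 _ (hpos hy)) (fun y _ => hg₂ y)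
    (fun y hy => hasDerivAt_const_mul_sub_rpow _ 0 _ (hpos hy)) (fun y _ => hg₃ y)
    (fun y hy => ?_)
  · simpa [taylorRemainder₂] using hcube
  · have hy : 1 ≤ y := hy.1.le
    simp only [one_mul, sub_zero, show p - 1 - 1 = p - 2 by ring, show p - 2 - 1 = p - 3 by ring,
      abs_mul, abs_of_pos hp, abs_of_nonneg (Real.rpow_nonneg (zero_le_one.trans hy) _)]
    calc p * |p - 1| * |p - 2| * y ^ (p - 3) ≤ 3 * |p - 1| * |p - 2| * 1 := by
          gcongr
          exact Real.rpow_le_one_of_one_le_of_nonpos hy (by linarith)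
      _ = 6 * C := by simp only [C, abs_mul]; ring

theorem abs_rpow_sub_taylor₂_le_of_lt_one (hp : 0 < p) (hp3 : p ≤ 3) (ht₀ : 0 ≤ t)
    (ht₁ : t < 1) :
    |t ^ p - 1 - p * (t - 1) - p * (p - 1) / 2 * (t - 1) ^ 2|
      ≤ |(p - 1) * (p - 2)| / 2 * (1 - t) ^ 3 := by
  set b := (p - 1) * (p - 2)
  have hu : 0 < 1 - t := sub_pos.2 ht₁
  set c := (SignType.sign b : ℝ) * (1 - t) ^ (3 - p)
  have hpos {y} (hy : y ∈ Ioc t 1) : 0 < y := ht₀.trans_lt hy.1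
  have hcomp := abs_taylorRemainder₂_le_neg ht₁.le
    (continuous_const_mul_sub_rpow 1 0 hp.le).continuousOn
    (continuous_const_mul_sub_rpow c t hp.le).continuousOn
    (fun y hy => hasDerivAt_const_mul_sub_rpow 1 0 p (hpos hy))
    (fun y hy => hasDerivAt_const_mul_sub_rpow c t p hy.1)
    (fun y hy => hasDerivAt_const_mul_sub_rpow _ 0 _ (hpos hy))
    (fun y hy => hasDerivAt_const_mul_sub_rpow _ t _ hy.1)
    (fun y hy => hasDerivAt_const_mul_sub_rpow _ 0 _ (hpos hy))
    (fun y hy => hasDerivAt_const_mul_sub_rpow _ t _ hy.1)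
    (fun y hy => ?_)
  · have hR : -taylorRemainder₂ (fun z => c * (z - t) ^ p) (fun z => c * p * (z - t) ^ (p - 1))
        (fun z => c * p * (p - 1) * (z - t) ^ (p - 1 - 1)) 1 t = |b| / 2 * (1 - t) ^ 3 := by
      rw [← self_mul_sign b]
      simp only [taylorRemainder₂, c, sub_self, Real.zero_rpow hp.ne', Real.rpow_sub hu,
        Real.rpow_one, Real.rpow_ofNat]
      field_simp
      ring
    rw [← hR]
    simpa [taylorRemainder₂] using hcomp
  · have hyt : 0 < y - t := sub_pos.2 hy.1
    have hshrink : y ^ (p - 3) ≤ (1 - t) ^ (3 - p) * (y - t) ^ (p - 3) := by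
      have hle : (y - t) / (1 - t) ≤ y := by
        rw [div_le_iff₀ hu]
        nlinarith [hy.2]
      calc y ^ (p - 3) ≤ ((y - t) / (1 - t)) ^ (p - 3) :=
            Real.rpow_le_rpow_of_nonpos (div_pos hyt hu) hle (by linarith)
        _ = (1 - t) ^ (3 - p) * (y - t) ^ (p - 3) := by
          rw [Real.div_rpow hyt.le hu.le, show 3 - p = -(p - 3) by ring, Real.rpow_neg hu.le]
          ring
    simp only [one_mul, sub_zero, show p - 1 - 1 = p - 2 by ring, show p - 2 - 1 = p - 3 by ring,
      abs_mul, abs_of_pos hp, abs_of_nonneg (Real.rpow_nonneg (ht₀.trans hy.1.le) _)]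
    calc p * |p - 1| * |p - 2| * y ^ (p - 3) = p * |b| * y ^ (p - 3) := by rw [abs_mul]; ring
      _ ≤ p * |b| * ((1 - t) ^ (3 - p) * (y - t) ^ (p - 3)) := by gcongr
      _ = c * p * (p - 1) * (p - 2) * (y - t) ^ (p - 3) := by
          rw [← self_mul_sign b]
          ring

theorem abs_rpow_sub_taylor₂_le (hp : 0 < p) (hp3 : p ≤ 3) (ht : 0 ≤ t) :
    |t ^ p - 1 - p * (t - 1) - p * (p - 1) / 2 * (t - 1) ^ 2|
      ≤ |(p - 1) * (p - 2)| / 2 * |t - 1| ^ 3 := by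
  rcases le_or_gt 1 t with h | h
  · rw [abs_of_nonneg (sub_nonneg.2 h)]
    exact abs_rpow_sub_taylor₂_le_of_one_le hp hp3 h
  · rw [abs_of_neg (sub_neg.2 h), neg_sub]
    exact abs_rpow_sub_taylor₂_le_of_lt_one hp hp3 ht h

end RpowTaylor

theorem stmt19_general (a lam : ℝ) (ha : 0 < a) (hlam1 : -1 < lam) (hlam2 : lam < 2)
    (x : ℝ) (hx : 0 ≤ x) :
    |x ^ (lam + 1) / a ^ lam - a - (lam + 1) * (x - a)
        - (lam * (lam + 1) / (2 * a)) * (x - a) ^ 2|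
      ≤ (|(lam - 1) * lam| / 2) * |x - a| ^ 3 / a ^ 2 := by
  have key := abs_rpow_sub_taylor₂_le (p := lam + 1) (by linarith) (by linarith)
    (div_nonneg hx ha.le)
  rw [Real.div_rpow hx ha.le, Real.rpow_add ha, Real.rpow_one] at key
  set E := x ^ (lam + 1) / (a ^ lam * a) - 1 - (lam + 1) * (x / a - 1)
    - (lam + 1) * (lam + 1 - 1) / 2 * (x / a - 1) ^ 2
  calc _ = |a * E| := by
        congr 1
        simp only [E]
        field_simp
        ring
    _ = a * |E| := by rw [abs_mul, abs_of_pos ha]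
    _ ≤ a * (|(lam + 1 - 1) * (lam + 1 - 2)| / 2 * |x / a - 1| ^ 3) := by gcongr
    _ = |(lam - 1) * lam| / 2 * |x - a| ^ 3 / a ^ 2 := by
        rw [div_sub_one ha.ne', abs_div, abs_of_pos ha,
          show (lam + 1 - 1) * (lam + 1 - 2) = (lam - 1) * lam by ring]
        field_simp

theorem stmt19 (a lam : ℝ) (ha : 0 < a) (hlam1 : -1 < lam) (hlam2 : lam < 2) (hlam0 : lam ≠ 0)
    (x : ℝ) (hx : 0 ≤ x) :
    |x ^ (lam + 1) / a ^ lam - a - (lam + 1) * (x - a)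
        - (lam * (lam + 1) / (2 * a)) * (x - a) ^ 2|
      ≤ (|(lam - 1) * lam| / 2) * |x - a| ^ 3 / a ^ 2 :=
  stmt19_general a lam ha hlam1 hlam2 x hx
end
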